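/- arXiv:2508.14974 — 6 statements merged into one kernel-verified Lean document; each statement's English description precedes it below -/
import Mathlib

section
/- Let P be a finite poset, p ∈ P, and suppose there exist unique elements r, q ∈ P such that r is covered by p and p is covered by q (i.e., p has exactly one lower cover r and exactly one upper cover q). Then for every order ideal I of P, the toggleability statistic satisfies T_p(I) = 1_r(I) - 2·1_p(I) + 1_q(I), where 1_x(I) is 1 if x ∈ I and 0 otherwise. -/
open scoped Classical

/-- The order-ideal indicator function. -/
noncomputable def ind {α : Type*} (I : Set α) (p : α) : ℝ := if p ∈ I then 1 else 0

/-- The toggleability statistic: `1` if `p ∈ Min(P \ I)`, `-1` if `p ∈ Max I`, `0` otherwise. -/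
noncomputable def tog {α : Type*} [PartialOrder α] (I : Set α) (p : α) : ℝ :=
  if p ∉ I ∧ ∀ y, y ∉ I → y ≤ p → y = p then 1
  else if p ∈ I ∧ ∀ y ∈ I, p ≤ y → p = y then -1
  else 0

/-- If `p` has a unique lower cover `r` and a unique upper cover `q`, then
`T_p = 1_r - 2·1_p + 1_q` on order ideals. -/
theorem stmt_3 {α : Type*} [PartialOrder α] [Fintype α] (p r q : α)
    (hr : r ⋖ p) (hq : p ⋖ q)
    (hru : ∀ r', r' ⋖ p → r' = r) (hqu : ∀ q', p ⋖ q' → q' = q)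
    (I : Set α) (hI : IsLowerSet I) :
    tog I p = ind I r - 2 * ind I p + ind I q := by
  unfold tog ind
  by_cases hp : p ∈ I
  · have hrI : r ∈ I := hI hr.le hp
    by_cases hqI : q ∈ I
    · rw [if_neg, if_neg]
      · simp only [if_pos hp, if_pos hrI, if_pos hqI]; norm_num
      · rintro ⟨_, h⟩
        exact hq.ne (h q hqI hq.le)
      · simp [hp]
    · rw [if_neg, if_pos]
      · simp only [if_pos hp, if_pos hrI, if_neg hqI]; norm_num
      · refine ⟨hp, fun y hy hpy => ?_⟩
        by_contra hne
        have hlt : p < y := lt_of_le_of_ne hpy hne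
        obtain ⟨z, hpz, hzy⟩ := hlt.exists_covby_le
        rw [hqu z hpz] at hzy
        exact hqI (hI hzy hy)
      · simp [hp]
  · have hqI : q ∉ I := fun h => hp (hI hq.le h)
    by_cases hrI : r ∈ I
    · rw [if_pos]
      · simp only [if_neg hp, if_pos hrI, if_neg hqI]; norm_num
      · refine ⟨hp, fun y hy hyp => ?_⟩
        by_contra hne
        have hlt : y < p := lt_of_le_of_ne hyp hne
        obtain ⟨z, hyz, hzp⟩ := hlt.exists_le_covby
        rw [hru z hzp] at hyz
        exact hy (hI hyz hrI)
    · rw [if_neg, if_neg]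
      · simp only [if_neg hp, if_neg hrI, if_neg hqI]; norm_num
      · simp [hp]
      · rintro ⟨_, h⟩
        exact hr.ne (h r hrI hr.le)
end

section
/- Let P = [m]×[n] be the product of two chains with m,n ≥ 2. For each integer k with 1-n ≤ k ≤ m-1, the statistic g_k = -2·Σ_{(i,j)∈P, i-j=k} 1_{(i,j)} + Σ_{(i,j)∈P, |i-j-k|=1} 1_{(i,j)} on order ideals of P equals the statistic Σ_{(i,j)∈P, i-j=k} T_{(i,j)} when k ≠ 0, and equals -1 + Σ_{(i,i)∈P} T_{(i,i)} when k = 0. -/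
/-!
Enlarge `I` by all points of `ℤ × ℤ` with a negative coordinate. The result `E` is a lower set of
`ℤ × ℤ` with the same toggles as `I` on the rectangle, and for a lower set of `ℤ × ℤ` the toggle
statistic is local:
`T(i,j) = 1(i,j+1) + 1(i+1,j) - 2·1(i,j) - (w(i+1,j+1) - w(i,j))` with `w(i,j) = 1(i-1,j)·1(i,j-1)`.
Summed along the diagonal `i - j = k` over the rectangle, the `w`-terms telescope: `w` vanishes
past the upper end, and at the lower end one of the two neighbours has a negative coordinate, so
there `w = 1(i-1,j) + 1(i,j-1) - 1`. What remains is `-1` plus sums of `1_E` along the diagonals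
`k - 1` and `k + 1` over windows that start one point below the rectangle when `k ≤ 0`,
resp. `k ≥ 0` (such a point lies in `E`), and may run past it at the top (where `1_E = 0`).
-/

open scoped Classical

open Finset

namespace ChainProduct

lemma ind_of_mem {α : Type*} {s : Set α} {a : α} (h : a ∈ s) : ind s a = 1 := if_pos h

lemma ind_of_notMem {α : Type*} {s : Set α} {a : α} (h : a ∉ s) : ind s a = 0 := if_neg h

section IntegerLowerSets

variable {E : Set (ℤ × ℤ)}

lemma forall_notMem_le_eq_iff (hE : IsLowerSet E) (i j : ℤ) :
    (∀ y, y ∉ E → y ≤ (i, j) → y = (i, j)) ↔ (i - 1, j) ∈ E ∧ (i, j - 1) ∈ E := by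
  constructor
  · intro h
    constructor <;> by_contra hy <;> simpa using h _ hy (by simp [Prod.le_def])
  · rintro ⟨h₁, h₂⟩ y hy hle
    by_contra hne
    obtain ⟨hle₁, hle₂⟩ := Prod.le_def.1 hle
    have hbelow : y.1 ≤ i - 1 ∨ y.2 ≤ j - 1 := by
      by_contra! h
      exact hne (Prod.ext (by simp only; omega) (by simp only; omega))
    rcases hbelow with h | h
    · exact hy (hE (show y ≤ (i - 1, j) from Prod.le_def.2 ⟨h, hle₂⟩) h₁)
    · exact hy (hE (show y ≤ (i, j - 1) from Prod.le_def.2 ⟨hle₁, h⟩) h₂)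

lemma forall_mem_ge_eq_iff (hE : IsLowerSet E) (i j : ℤ) :
    (∀ y ∈ E, (i, j) ≤ y → (i, j) = y) ↔ (i + 1, j) ∉ E ∧ (i, j + 1) ∉ E := by
  constructor
  · intro h
    constructor <;> intro hy <;> simpa using h _ hy (by simp [Prod.le_def])
  · rintro ⟨h₁, h₂⟩ y hy hle
    by_contra hne
    obtain ⟨hle₁, hle₂⟩ := Prod.le_def.1 hle
    have habove : i + 1 ≤ y.1 ∨ j + 1 ≤ y.2 := by
      by_contra! h
      exact hne (Prod.ext (by simp only; omega) (by simp only; omega))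
    rcases habove with h | h
    · exact h₁ (hE (show (i + 1, j) ≤ y from Prod.le_def.2 ⟨h, hle₂⟩) hy)
    · exact h₂ (hE (show (i, j + 1) ≤ y from Prod.le_def.2 ⟨hle₁, h⟩) hy)

lemma tog_eq_of_isLowerSet (hE : IsLowerSet E) (i j : ℤ) :
    tog E (i, j) = ind E (i, j + 1) + ind E (i + 1, j) - 2 * ind E (i, j)
      - (ind E (i, j + 1) * ind E (i + 1, j) - ind E (i - 1, j) * ind E (i, j - 1)) := by
  rw [tog, forall_notMem_le_eq_iff hE, forall_mem_ge_eq_iff hE]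
  by_cases h : (i, j) ∈ E
  · have h₁ : (i - 1, j) ∈ E := hE (by simp [Prod.le_def]) h
    have h₂ : (i, j - 1) ∈ E := hE (by simp [Prod.le_def]) h
    by_cases h₃ : (i + 1, j) ∈ E <;> by_cases h₄ : (i, j + 1) ∈ E <;> simp [ind, *] <;> norm_num
  · have h₃ : (i + 1, j) ∉ E := fun h' => h (hE (by simp [Prod.le_def]) h')
    have h₄ : (i, j + 1) ∉ E := fun h' => h (hE (by simp [Prod.le_def]) h')
    by_cases h₁ : (i - 1, j) ∈ E <;> by_cases h₂ : (i, j - 1) ∈ E <;> simp [ind, *]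

noncomputable def cornerInd (E : Set (ℤ × ℤ)) (k i : ℤ) : ℝ :=
  ind E (i - 1, i - k) * ind E (i, i - k - 1)

lemma tog_eq_of_isLowerSet_diagonal (hE : IsLowerSet E) (k i : ℤ) :
    tog E (i, i - k)
      = ind E (i, i - (k - 1)) + ind E (i + 1, i + 1 - (k + 1)) - 2 * ind E (i, i - k)
        - (cornerInd E k (i + 1) - cornerInd E k i) := by
  rw [tog_eq_of_isLowerSet hE, cornerInd, cornerInd]
  ring_nf

end IntegerLowerSets

lemma sum_Ico_int_sub {M : Type*} [AddCommGroup M] (f : ℤ → M) {a b : ℤ} (hab : a ≤ b) :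
    ∑ i ∈ Ico a b, (f (i + 1) - f i) = f b - f a := by
  induction b, hab using Int.leInduction with
  | base => simp
  | succ b hab ih => rw [← sum_Ico_add_eq_sum_Ico_add_one hab, ih]; abel

lemma sum_filter_abs_sub_eq_one {α M : Type*} [AddCommMonoid M] (s : Finset α) (g : α → ℤ)
    (k : ℤ) (f : α → M) :
    ∑ x ∈ s.filter (fun x => |g x - k| = 1), f x
      = ∑ x ∈ s.filter (fun x => g x = k - 1), f x + ∑ x ∈ s.filter (fun x => g x = k + 1), f x := by
  rw [← sum_union (disjoint_filter.2 fun x _ h₁ h₂ => by omega), ← filter_or]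
  exact sum_congr (filter_congr fun x _ => by rw [abs_eq zero_le_one]; omega) fun _ _ => rfl

section Extension

variable {m n : ℕ} {I : Set (Fin m × Fin n)}

def embed (p : Fin m × Fin n) : ℤ × ℤ := (p.1, p.2)

@[simp] lemma embed_fst (p : Fin m × Fin n) : (embed p).1 = p.1 := rfl

@[simp] lemma embed_snd (p : Fin m × Fin n) : (embed p).2 = p.2 := rfl

lemma embed_injective : Function.Injective (embed : Fin m × Fin n → ℤ × ℤ) :=
  fun p q h => Prod.ext (Fin.ext (by simpa using congrArg Prod.fst h))
    (Fin.ext (by simpa using congrArg Prod.snd h))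

lemma embed_le_embed {p q : Fin m × Fin n} : embed p ≤ embed q ↔ p ≤ q := by
  simp only [Prod.le_def, embed_fst, embed_snd, Nat.cast_le, Fin.val_fin_le]

lemma exists_embed_eq {y : ℤ × ℤ} {p : Fin m × Fin n} (h₁ : 0 ≤ y.1) (h₂ : 0 ≤ y.2)
    (hle : y ≤ embed p) : ∃ q : Fin m × Fin n, embed q = y := by
  obtain ⟨hle₁, hle₂⟩ := Prod.le_def.1 hle
  simp only [embed_fst, embed_snd] at hle₁ hle₂
  exact ⟨(⟨y.1.toNat, by omega⟩, ⟨y.2.toNat, by omega⟩), Prod.ext (by simp [h₁]) (by simp [h₂])⟩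

def extend (I : Set (Fin m × Fin n)) : Set (ℤ × ℤ) :=
  {q | q.1 < 0 ∨ q.2 < 0 ∨ ∃ p ∈ I, q ≤ embed p}

lemma isLowerSet_extend : IsLowerSet (extend I) := by
  rintro a b hba (h | h | ⟨p, hp, hle⟩)
  · exact Or.inl (lt_of_le_of_lt hba.1 h)
  · exact Or.inr (Or.inl (lt_of_le_of_lt hba.2 h))
  · exact Or.inr (Or.inr ⟨p, hp, hba.trans hle⟩)

lemma mem_extend_of_fst_neg {q : ℤ × ℤ} (h : q.1 < 0) : q ∈ extend I := Or.inl h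

lemma mem_extend_of_snd_neg {q : ℤ × ℤ} (h : q.2 < 0) : q ∈ extend I := Or.inr (Or.inl h)

lemma notMem_extend {q : ℤ × ℤ} (h₁ : 0 ≤ q.1) (h₂ : 0 ≤ q.2) (h : m ≤ q.1 ∨ n ≤ q.2) :
    q ∉ extend I := by
  rintro (h' | h' | ⟨p, -, hle⟩)
  · omega
  · omega
  · have := Prod.le_def.1 hle
    simp only [embed_fst, embed_snd] at this
    omega

lemma embed_mem_extend (hI : IsLowerSet I) {p : Fin m × Fin n} : embed p ∈ extend I ↔ p ∈ I := by
  refine ⟨?_, fun h => Or.inr (Or.inr ⟨p, h, le_rfl⟩)⟩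
  rintro (h | h | ⟨q, hq, hle⟩)
  · simp only [embed_fst] at h; omega
  · simp only [embed_snd] at h; omega
  · exact hI (embed_le_embed.1 hle) hq

lemma ind_extend_embed (hI : IsLowerSet I) (p : Fin m × Fin n) :
    ind (extend I) (embed p) = ind I p := by
  simp only [ind, embed_mem_extend hI]

lemma tog_extend_embed (hI : IsLowerSet I) (p : Fin m × Fin n) :
    tog (extend I) (embed p) = tog I p := by
  have hmin : (∀ y, y ∉ extend I → y ≤ embed p → y = embed p) ↔ ∀ y, y ∉ I → y ≤ p → y = p := by
    refine ⟨fun h y hy hle => embed_injective ?_, fun h y hy hle => ?_⟩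
    · exact h _ ((embed_mem_extend hI).not.2 hy) (embed_le_embed.2 hle)
    · obtain ⟨q, rfl⟩ := exists_embed_eq (not_lt.1 fun h' => hy (mem_extend_of_fst_neg h'))
        (not_lt.1 fun h' => hy (mem_extend_of_snd_neg h')) hle
      rw [h q ((embed_mem_extend hI).not.1 hy) (embed_le_embed.1 hle)]
  have hmax : (∀ y ∈ extend I, embed p ≤ y → embed p = y) ↔ ∀ y ∈ I, p ≤ y → p = y := by
    refine ⟨fun h y hy hle => embed_injective ?_, fun h y hy hle => ?_⟩
    · exact h _ ((embed_mem_extend hI).2 hy) (embed_le_embed.2 hle)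
    · have h₁ : 0 ≤ y.1 := le_trans (by simp) hle.1
      have h₂ : 0 ≤ y.2 := le_trans (by simp) hle.2
      obtain ⟨p', hp', hle'⟩ : ∃ p' ∈ I, y ≤ embed p' := by
        rcases hy with h' | h' | h'
        · omega
        · omega
        · exact h'
      obtain ⟨q, rfl⟩ := exists_embed_eq h₁ h₂ hle'
      rw [h q (hI (embed_le_embed.1 hle') hp') (embed_le_embed.1 hle)]
  simp only [tog, embed_mem_extend hI, hmin, hmax]
  congr

end Extension

section Diagonals

variable {m n : ℕ} {I : Set (Fin m × Fin n)}

abbrev diagonal (m n : ℕ) (c : ℤ) : Finset (Fin m × Fin n) :=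
  univ.filter fun p => (p.1 : ℤ) - (p.2 : ℤ) = c

lemma sum_diagonal_eq_sum_Ico {M : Type*} [AddCommMonoid M] (f : ℤ × ℤ → M) (c : ℤ) :
    ∑ p ∈ diagonal m n c, f (embed p)
      = ∑ i ∈ Ico (max 0 c) (min (m : ℤ) (n + c)), f (i, i - c) := by
  refine sum_bij (fun p _ => (p.1 : ℤ)) (fun p hp => ?_) (fun p hp q hq h => ?_) (fun i hi => ?_)
    (fun p hp => ?_)
  · simp only [mem_filter, mem_univ, true_and] at hp
    have := p.1.isLt; have := p.2.isLt
    simp only [mem_Ico]; omega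
  · simp only [mem_filter, mem_univ, true_and] at hp hq
    exact Prod.ext (Fin.ext (by omega)) (Fin.ext (by omega))
  · simp only [mem_Ico] at hi
    refine ⟨(⟨i.toNat, by omega⟩, ⟨(i - c).toNat, by omega⟩), ?_, ?_⟩
    · simp only [mem_filter, mem_univ, Int.ofNat_toNat, true_and]; omega
    · simp only [Int.ofNat_toNat, sup_eq_left]; omega
  · simp only [mem_filter, mem_univ, true_and] at hp
    congr 1
    exact Prod.ext rfl (by simp only [embed_snd]; omega)

noncomputable def windowSum (E : Set (ℤ × ℤ)) (c L R : ℤ) : ℝ := ∑ i ∈ Ico L R, ind E (i, i - c)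

lemma windowSum_eq_ind_add {E : Set (ℤ × ℤ)} {c L R : ℤ} (h : L < R) :
    windowSum E c L R = ind E (L, L - c) + windowSum E c (L + 1) R := by
  rw [windowSum, windowSum, ← insert_Ico_add_one_left_eq_Ico h, sum_insert (by simp)]

lemma windowSum_extend (hI : IsLowerSet I) {c L R : ℤ} (hc₁ : -(n : ℤ) ≤ c) (hc₂ : c ≤ m)
    (hL : L ≤ max 0 c) (hR : min (m : ℤ) (n + c) ≤ R) :
    windowSum (extend I) c L R = ((max 0 c - L : ℤ) : ℝ) + ∑ p ∈ diagonal m n c, ind I p := by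
  have hab : max 0 c ≤ min (m : ℤ) (n + c) := by omega
  have before : ∑ i ∈ Ico L (max 0 c), ind (extend I) (i, i - c) = ((max 0 c - L : ℤ) : ℝ) := by
    have hone : ∀ i ∈ Ico L (max 0 c), ind (extend I) (i, i - c) = 1 := by
      intro i hi
      rw [mem_Ico] at hi
      rcases lt_or_ge i 0 with h | h
      · exact ind_of_mem (mem_extend_of_fst_neg h)
      · exact ind_of_mem (mem_extend_of_snd_neg (by simp only; omega))
    rw [sum_congr rfl hone, sum_const, Int.card_Ico, nsmul_one, ← Int.cast_natCast,
      Int.toNat_of_nonneg (by omega)]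
  have inside : ∑ i ∈ Ico (max 0 c) (min (m : ℤ) (n + c)), ind (extend I) (i, i - c)
      = ∑ p ∈ diagonal m n c, ind I p :=
    (sum_diagonal_eq_sum_Ico _ c).symm.trans (sum_congr rfl fun p _ => ind_extend_embed hI p)
  have after : ∑ i ∈ Ico (min (m : ℤ) (n + c)) R, ind (extend I) (i, i - c) = 0 :=
    sum_eq_zero fun i hi => ind_of_notMem (notMem_extend (by simp only [mem_Ico] at hi ⊢; omega)
      (by simp only [mem_Ico] at hi ⊢; omega) (by simp only [mem_Ico] at hi ⊢; omega))
  rw [windowSum, ← Ico_union_Ico_eq_Ico hL (hab.trans hR),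
    sum_union (Ico_disjoint_Ico_consecutive _ _ _), ← Ico_union_Ico_eq_Ico hab hR,
    sum_union (Ico_disjoint_Ico_consecutive _ _ _), before, inside, after, add_zero]

lemma sum_diagonal_tog (hI : IsLowerSet I) {k : ℤ} (hk₁ : 1 - (n : ℤ) ≤ k)
    (hk₂ : k ≤ (m : ℤ) - 1) :
    ∑ p ∈ diagonal m n k, tog I p =
      windowSum (extend I) (k - 1) (max 0 k - 1) (min (m : ℤ) (n + k))
        + windowSum (extend I) (k + 1) (max 0 k) (min (m : ℤ) (n + k) + 1)
        - 2 * windowSum (extend I) k (max 0 k) (min (m : ℤ) (n + k)) - 1 := by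
  set E := extend I
  set A := max 0 k with hA
  set B := min (m : ℤ) (n + k) with hB
  have hAB : A ≤ B := by omega
  have hwB : cornerInd E k B = 0 := by
    rcases le_total (m : ℤ) (n + k) with h | h
    · exact mul_eq_zero_of_right _ (ind_of_notMem (notMem_extend (by omega) (by omega) (by omega)))
    · exact mul_eq_zero_of_left (ind_of_notMem (notMem_extend (by omega) (by omega) (by omega))) _
  have hwA : cornerInd E k A = ind E (A - 1, A - 1 - (k - 1)) + ind E (A, A - (k + 1)) - 1 := by
    have hcorner : (1 - ind E (A - 1, A - k)) * (1 - ind E (A, A - k - 1)) = 0 := by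
      rcases le_total k 0 with h | h
      · rw [ind_of_mem (mem_extend_of_fst_neg (q := (A - 1, A - k)) (by simp only; omega)),
          sub_self, zero_mul]
      · rw [ind_of_mem (mem_extend_of_snd_neg (q := (A, A - k - 1)) (by simp only; omega)),
          sub_self, mul_zero]
    rw [cornerInd, show A - 1 - (k - 1) = A - k by ring, show A - (k + 1) = A - k - 1 by ring]
    linear_combination hcorner
  calc ∑ p ∈ diagonal m n k, tog I p = ∑ i ∈ Ico A B, tog E (i, i - k) :=
        (sum_congr rfl fun p _ => (tog_extend_embed hI p).symm).trans (sum_diagonal_eq_sum_Ico _ k)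
    _ = windowSum E (k - 1) A B + windowSum E (k + 1) (A + 1) (B + 1) - 2 * windowSum E k A B
          - (cornerInd E k B - cornerInd E k A) := by
        simp only [tog_eq_of_isLowerSet_diagonal (show IsLowerSet E from isLowerSet_extend),
          sum_sub_distrib, sum_add_distrib, ← mul_sum, sum_Ico_int_sub (cornerInd E k) hAB,
          windowSum, sum_Ico_add' (fun i => ind E (i, i - (k + 1)))]
    _ = _ := by
        rw [windowSum_eq_ind_add (show A - 1 < B by omega), sub_add_cancel,
          windowSum_eq_ind_add (show A < B + 1 by omega), hwA, hwB]
        ring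

end Diagonals

end ChainProduct

theorem stmt_8_general (m n : ℕ) (k : ℤ)
    (hk1 : 1 - (n : ℤ) ≤ k) (hk2 : k ≤ (m : ℤ) - 1)
    (I : Set (Fin m × Fin n)) (hI : IsLowerSet I) :
    -2 * (∑ p ∈ Finset.univ.filter (fun p : Fin m × Fin n => (p.1 : ℤ) - (p.2 : ℤ) = k),
        ind I p)
      + (∑ p ∈ Finset.univ.filter
          (fun p : Fin m × Fin n => |(p.1 : ℤ) - (p.2 : ℤ) - k| = 1), ind I p)
      = (if k = 0 then -1 else 0)
        + ∑ p ∈ Finset.univ.filter (fun p : Fin m × Fin n => (p.1 : ℤ) - (p.2 : ℤ) = k),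
            tog I p := by
  open ChainProduct in
  rw [sum_filter_abs_sub_eq_one, sum_diagonal_tog hI hk1 hk2,
    windowSum_extend (c := k - 1) (L := max 0 k - 1) (R := min (m : ℤ) (n + k)) hI
      (by omega) (by omega) (by omega) (by omega),
    windowSum_extend (c := k + 1) (L := max 0 k) (R := min (m : ℤ) (n + k) + 1) hI
      (by omega) (by omega) (by omega) (by omega),
    windowSum_extend (c := k) (L := max 0 k) (R := min (m : ℤ) (n + k)) hI
      (by omega) (by omega) (by omega) (by omega)]
  have hcount : (max 0 (k - 1) - (max 0 k - 1)) + (max 0 (k + 1) - max 0 k)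
      - 2 * (max 0 k - max 0 k) = 1 - (if k = 0 then -1 else 0 : ℤ) := by
    split_ifs <;> omega
  have hcount_real := congrArg (Int.cast : ℤ → ℝ) hcount
  push_cast at hcount_real ⊢
  linarith

/-- In `P = [m] × [n]`, for each diagonal class `i - j = k` with `1-n ≤ k ≤ m-1`,
the statistic `g_k = -2·Σ_{i-j=k} 1_{(i,j)} + Σ_{|i-j-k|=1} 1_{(i,j)}` equals
`Σ_{i-j=k} T_{(i,j)}` when `k ≠ 0` and `-1 + Σ_{i=j} T_{(i,i)}` when `k = 0`. -/
theorem stmt_8 (m n : ℕ) (hm : 2 ≤ m) (hn : 2 ≤ n) (k : ℤ)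
    (hk1 : 1 - (n : ℤ) ≤ k) (hk2 : k ≤ (m : ℤ) - 1)
    (I : Set (Fin m × Fin n)) (hI : IsLowerSet I) :
    -2 * (∑ p ∈ Finset.univ.filter (fun p : Fin m × Fin n => (p.1 : ℤ) - (p.2 : ℤ) = k),
        ind I p)
      + (∑ p ∈ Finset.univ.filter
          (fun p : Fin m × Fin n => |(p.1 : ℤ) - (p.2 : ℤ) - k| = 1), ind I p)
      = (if k = 0 then -1 else 0)
        + ∑ p ∈ Finset.univ.filter (fun p : Fin m × Fin n => (p.1 : ℤ) - (p.2 : ℤ) = k),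
            tog I p :=
  stmt_8_general m n k hk1 hk2 I hI
end

section
/- Let P be a finite poset with elements p, q_1, q_2 such that the principal order ideals below q_1 and q_2 are disjoint, p is the unique element covering both q_1 and q_2, and each element of P is comparable in the cover structure appropriately (as in a poset defined by a connected diagram). Suppose f = c + Σ_{r∈P} c_r T_r lies in the span of order-ideal indicator functions {1_r : r ∈ P}. Then c_p = 0. -/
open scoped Classical

lemma tog_one {α : Type*} [PartialOrder α] {I : Set α} {p : α}
    (h : p ∉ I ∧ ∀ y, y ∉ I → y ≤ p → y = p) : tog I p = 1 := by
  unfold tog; rw [if_pos h]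

lemma tog_negone {α : Type*} [PartialOrder α] {I : Set α} {p : α}
    (h : ¬(p ∉ I ∧ ∀ y, y ∉ I → y ≤ p → y = p))
    (h' : p ∈ I ∧ ∀ y ∈ I, p ≤ y → p = y) : tog I p = -1 := by
  unfold tog; rw [if_neg h, if_pos h']

lemma tog_zero {α : Type*} [PartialOrder α] {I : Set α} {p : α}
    (h : ¬(p ∉ I ∧ ∀ y, y ∉ I → y ≤ p → y = p))
    (h' : ¬(p ∈ I ∧ ∀ y ∈ I, p ≤ y → p = y)) : tog I p = 0 := by
  unfold tog; rw [if_neg h, if_neg h']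

/-- If `q₁, q₂` have disjoint principal ideals, `p` covers exactly `q₁` and `q₂` and is
the unique common upper cover of `q₁` and `q₂`, and `f = c + Σ_r c_r T_r` lies in the span
of order-ideal indicator functions, then `c_p = 0`. -/
theorem stmt_9 {α : Type*} [PartialOrder α] [Fintype α]
    (p q₁ q₂ : α)
    (hdisj : Set.Iic q₁ ∩ Set.Iic q₂ = ∅)
    (h1 : q₁ ⋖ p) (h2 : q₂ ⋖ p)
    (hlow : ∀ r, r ⋖ p → r = q₁ ∨ r = q₂)
    (huniq : ∀ p', q₁ ⋖ p' → q₂ ⋖ p' → p' = p)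
    (c : ℝ) (cr : α → ℝ) (f : {I : Set α // IsLowerSet I} → ℝ)
    (hf : ∀ I, f I = c + ∑ r, cr r * tog I.1 r)
    (hspan : f ∈ Submodule.span ℝ
      (Set.range fun (r : α) (I : {I : Set α // IsLowerSet I}) =>
        if r ∈ I.1 then (1 : ℝ) else 0)) :
    cr p = 0 := by
  -- basic consequences
  have hdisj' : ∀ x, x ≤ q₁ → x ≤ q₂ → False := by
    intro x hx hx'
    exact Set.eq_empty_iff_forall_notMem.mp hdisj x ⟨hx, hx'⟩
  have hq1q2 : ¬ q₁ ≤ q₂ := fun h => hdisj' q₁ le_rfl h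
  have hq2q1 : ¬ q₂ ≤ q₁ := fun h => hdisj' q₂ h le_rfl
  have hne : q₁ ≠ q₂ := fun h => hq1q2 h.le
  -- the four lower sets
  set S : Set α := Set.Iic q₁ ∪ Set.Iic q₂ with hSdef
  have hmemS : ∀ x, x ∈ S ↔ (x ≤ q₁ ∨ x ≤ q₂) := by
    intro x; simp [hSdef]
  have hq1S : q₁ ∈ S := (hmemS q₁).mpr (Or.inl le_rfl)
  have hq2S : q₂ ∈ S := (hmemS q₂).mpr (Or.inr le_rfl)
  have hpS : p ∉ S := by
    intro h
    rcases (hmemS p).mp h with h' | h'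
    · exact absurd (lt_of_lt_of_le h1.lt h') (lt_irrefl _)
    · exact absurd (lt_of_lt_of_le h2.lt h') (lt_irrefl _)
  have hS : IsLowerSet S := (isLowerSet_Iic q₁).union (isLowerSet_Iic q₂)
  have hJ1 : IsLowerSet (S \ {q₂}) := by
    intro a b hba ha
    refine ⟨hS hba ha.1, ?_⟩
    intro hb
    have hq2a : q₂ ≤ a := hb ▸ hba
    rcases (hmemS a).mp ha.1 with h' | h'
    · exact hq2q1 (hq2a.trans h')
    · exact ha.2 (le_antisymm h' hq2a)
  have hJ2 : IsLowerSet (S \ {q₁}) := by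
    intro a b hba ha
    refine ⟨hS hba ha.1, ?_⟩
    intro hb
    have hq1a : q₁ ≤ a := hb ▸ hba
    rcases (hmemS a).mp ha.1 with h' | h'
    · exact ha.2 (le_antisymm h' hq1a)
    · exact hq1q2 (hq1a.trans h')
  have hJ0 : IsLowerSet (S \ {q₁, q₂}) := by
    intro a b hba ha
    refine ⟨hS hba ha.1, ?_⟩
    intro hb
    rcases hb with hb | hb
    · have hq1a : q₁ ≤ a := hb ▸ hba
      rcases (hmemS a).mp ha.1 with h' | h'
      · exact ha.2 (Or.inl (le_antisymm h' hq1a))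
      · exact hq1q2 (hq1a.trans h')
    · have hq2a : q₂ ≤ a := hb ▸ hba
      rcases (hmemS a).mp ha.1 with h' | h'
      · exact hq2q1 (hq2a.trans h')
      · exact ha.2 (Or.inr (le_antisymm h' hq2a))
  -- every element strictly below p is ≤ q₁ or ≤ q₂
  have hbelow : ∀ y, y < p → y ≤ q₁ ∨ y ≤ q₂ := by
    intro y hy
    obtain ⟨s, hys, hsp⟩ := exists_le_covBy_of_lt hy
    rcases hlow s hsp with h | h
    · exact Or.inl (h ▸ hys)
    · exact Or.inr (h ▸ hys)
  -- the inclusion-exclusion identity for f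
  have keygen : ∀ g ∈ Submodule.span ℝ
      (Set.range fun (r : α) (I : {I : Set α // IsLowerSet I}) =>
        if r ∈ I.1 then (1 : ℝ) else 0),
      g ⟨S, hS⟩ - g ⟨S \ {q₂}, hJ1⟩ - g ⟨S \ {q₁}, hJ2⟩ + g ⟨S \ {q₁, q₂}, hJ0⟩ = 0 := by
    intro g hgspan
    induction hgspan using Submodule.span_induction with
    | mem g hg =>
      obtain ⟨r, rfl⟩ := hg
      by_cases hr1 : r = q₁
      · subst hr1
        simp [hq1S, hne, Set.mem_diff]
      · by_cases hr2 : r = q₂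
        · subst hr2
          simp [hq2S, Ne.symm hne, hr1, Set.mem_diff]
        · by_cases hrS : r ∈ S
          · simp [hrS, hr1, hr2, Set.mem_diff]
          · simp [hrS, Set.mem_diff]
    | zero => simp
    | add g h _ _ hg hh =>
      simp only [Pi.add_apply]
      linear_combination hg + hh
    | smul a g _ hg =>
      simp only [Pi.smul_apply, smul_eq_mul]
      linear_combination a * hg
  have key := keygen f hspan
  -- expand via hf
  rw [hf, hf, hf, hf] at key
  have key2 : ∑ r, cr r * (tog S r - tog (S \ {q₂}) r - tog (S \ {q₁}) r + tog (S \ {q₁, q₂}) r) = 0 := by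
    simp only [mul_sub, mul_add, Finset.sum_sub_distrib, Finset.sum_add_distrib]
    linear_combination key
  -- the combined tog statistic is the indicator of p
  have hrnotinJ : ∀ (r : α) (T : Set α), r ∉ S → T ⊆ S → r ∉ T := fun r T hr hT h => hr (hT h)
  have hD : ∀ r, tog S r - tog (S \ {q₂}) r - tog (S \ {q₁}) r + tog (S \ {q₁, q₂}) r
      = if r = p then 1 else 0 := by
    intro r
    by_cases hrp : r = p
    · subst hrp
      rw [if_pos rfl]
      have t0 : tog S r = 1 := by
        apply tog_one
        refine ⟨hpS, ?_⟩
        intro y hy hyr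
        by_contra hne'
        exact hy ((hmemS y).mpr (hbelow y (lt_of_le_of_ne hyr hne')))
      have t1 : tog (S \ {q₂}) r = 0 := by
        apply tog_zero
        · rintro ⟨-, h⟩
          exact h2.lt.ne (h q₂ (fun hq => hq.2 rfl) h2.lt.le)
        · rintro ⟨h, -⟩
          exact hpS h.1
      have t2 : tog (S \ {q₁}) r = 0 := by
        apply tog_zero
        · rintro ⟨-, h⟩
          exact h1.lt.ne (h q₁ (fun hq => hq.2 rfl) h1.lt.le)
        · rintro ⟨h, -⟩
          exact hpS h.1
      have t3 : tog (S \ {q₁, q₂}) r = 0 := by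
        apply tog_zero
        · rintro ⟨-, h⟩
          exact h1.lt.ne (h q₁ (fun hq => hq.2 (Or.inl rfl)) h1.lt.le)
        · rintro ⟨h, -⟩
          exact hpS h.1
      rw [t0, t1, t2, t3]; norm_num
    · rw [if_neg hrp]
      -- maximality of q₁ in S, and of q₂ in S
      have hmax1 : ∀ y ∈ S, q₁ ≤ y → q₁ = y := by
        intro y hy hle
        rcases (hmemS y).mp hy with h' | h'
        · exact le_antisymm hle h'
        · exact absurd (hle.trans h') hq1q2
      have hmax2 : ∀ y ∈ S, q₂ ≤ y → q₂ = y := by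
        intro y hy hle
        rcases (hmemS y).mp hy with h' | h'
        · exact absurd (hle.trans h') hq2q1
        · exact le_antisymm hle h'
      by_cases hr1 : r = q₁
      · rw [hr1]
        have t0 : tog S q₁ = -1 := tog_negone (fun h => h.1 hq1S) ⟨hq1S, hmax1⟩
        have t1 : tog (S \ {q₂}) q₁ = -1 := by
          refine tog_negone (fun h => h.1 ⟨hq1S, hne⟩) ⟨⟨hq1S, hne⟩, ?_⟩
          exact fun y hy hle => hmax1 y hy.1 hle
        have t2 : tog (S \ {q₁}) q₁ = 1 := by
          refine tog_one ⟨fun h => h.2 rfl, ?_⟩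
          intro y hy hyr
          by_contra hne'
          exact hy ⟨(hmemS y).mpr (Or.inl hyr), hne'⟩
        have t3 : tog (S \ {q₁, q₂}) q₁ = 1 := by
          refine tog_one ⟨fun h => h.2 (Or.inl rfl), ?_⟩
          intro y hy hyr
          by_contra hne'
          refine hy ⟨(hmemS y).mpr (Or.inl hyr), ?_⟩
          rintro (h | h)
          · exact hne' h
          · exact hq2q1 (h ▸ hyr)
        rw [t0, t1, t2, t3]; norm_num
      · by_cases hr2 : r = q₂
        · rw [hr2]
          have t0 : tog S q₂ = -1 := tog_negone (fun h => h.1 hq2S) ⟨hq2S, hmax2⟩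
          have t1 : tog (S \ {q₂}) q₂ = 1 := by
            refine tog_one ⟨fun h => h.2 rfl, ?_⟩
            intro y hy hyr
            by_contra hne'
            exact hy ⟨(hmemS y).mpr (Or.inr hyr), hne'⟩
          have t2 : tog (S \ {q₁}) q₂ = -1 := by
            refine tog_negone (fun h => h.1 ⟨hq2S, Ne.symm hne⟩) ⟨⟨hq2S, Ne.symm hne⟩, ?_⟩
            exact fun y hy hle => hmax2 y hy.1 hle
          have t3 : tog (S \ {q₁, q₂}) q₂ = 1 := by
            refine tog_one ⟨fun h => h.2 (Or.inr rfl), ?_⟩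
            intro y hy hyr
            by_contra hne'
            refine hy ⟨(hmemS y).mpr (Or.inr hyr), ?_⟩
            rintro (h | h)
            · exact hq1q2 (h ▸ hyr)
            · exact hne' h
          rw [t0, t1, t2, t3]; norm_num
        · by_cases hrS : r ∈ S
          · -- r in S, r ≠ q₁, q₂ : pairwise equalities
            have hrJ1 : r ∈ S \ {q₂} := ⟨hrS, hr2⟩
            have hrJ2 : r ∈ S \ {q₁} := ⟨hrS, hr1⟩
            have hrJ0 : r ∈ S \ {q₁, q₂} := ⟨hrS, by rintro (h | h); exacts [hr1 h, hr2 h]⟩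
            rcases (hmemS r).mp hrS with hr | hr
            · -- r ≤ q₁ : S vs S\{q₂} and S\{q₁} vs S\{q₁,q₂} agree
              have hrq2 : ¬ r ≤ q₂ := fun h => hdisj' r hr h
              have e1 : tog S r = tog (S \ {q₂}) r := by
                by_cases hmax : ∀ y ∈ S \ {q₂}, r ≤ y → r = y
                · rw [tog_negone (fun h => h.1 hrS) ⟨hrS, fun y hy hle => by
                      by_cases hyq : y = q₂
                      · exact absurd (hyq ▸ hle) hrq2
                      · exact hmax y ⟨hy, hyq⟩ hle⟩,
                    tog_negone (fun h => h.1 hrJ1) ⟨hrJ1, hmax⟩]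
                · rw [tog_zero (fun h => h.1 hrS) (fun h => hmax fun y hy hle => h.2 y hy.1 hle),
                    tog_zero (fun h => h.1 hrJ1) (fun h => hmax h.2)]
              have e2 : tog (S \ {q₁}) r = tog (S \ {q₁, q₂}) r := by
                by_cases hmax : ∀ y ∈ S \ {q₁, q₂}, r ≤ y → r = y
                · rw [tog_negone (fun h => h.1 hrJ2) ⟨hrJ2, fun y hy hle => by
                      by_cases hyq : y = q₂
                      · exact absurd (hyq ▸ hle) hrq2
                      · exact hmax y ⟨hy.1, by rintro (h | h); exacts [hy.2 h, hyq h]⟩ hle⟩,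
                    tog_negone (fun h => h.1 hrJ0) ⟨hrJ0, hmax⟩]
                · rw [tog_zero (fun h => h.1 hrJ2)
                      (fun h => hmax fun y hy hle => h.2 y ⟨hy.1, fun hq => hy.2 (Or.inl hq)⟩ hle),
                    tog_zero (fun h => h.1 hrJ0) (fun h => hmax h.2)]
              rw [e1, e2]; ring
            · -- r ≤ q₂ : S vs S\{q₁} and S\{q₂} vs S\{q₁,q₂} agree
              have hrq1 : ¬ r ≤ q₁ := fun h => hdisj' r h hr
              have e1 : tog S r = tog (S \ {q₁}) r := by
                by_cases hmax : ∀ y ∈ S \ {q₁}, r ≤ y → r = y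
                · rw [tog_negone (fun h => h.1 hrS) ⟨hrS, fun y hy hle => by
                      by_cases hyq : y = q₁
                      · exact absurd (hyq ▸ hle) hrq1
                      · exact hmax y ⟨hy, hyq⟩ hle⟩,
                    tog_negone (fun h => h.1 hrJ2) ⟨hrJ2, hmax⟩]
                · rw [tog_zero (fun h => h.1 hrS) (fun h => hmax fun y hy hle => h.2 y hy.1 hle),
                    tog_zero (fun h => h.1 hrJ2) (fun h => hmax h.2)]
              have e2 : tog (S \ {q₂}) r = tog (S \ {q₁, q₂}) r := by
                by_cases hmax : ∀ y ∈ S \ {q₁, q₂}, r ≤ y → r = y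
                · rw [tog_negone (fun h => h.1 hrJ1) ⟨hrJ1, fun y hy hle => by
                      by_cases hyq : y = q₁
                      · exact absurd (hyq ▸ hle) hrq1
                      · exact hmax y ⟨hy.1, by rintro (h | h); exacts [hyq h, hy.2 h]⟩ hle⟩,
                    tog_negone (fun h => h.1 hrJ0) ⟨hrJ0, hmax⟩]
                · rw [tog_zero (fun h => h.1 hrJ1)
                      (fun h => hmax fun y hy hle => h.2 y ⟨hy.1, fun hq => hy.2 (Or.inr hq)⟩ hle),
                    tog_zero (fun h => h.1 hrJ0) (fun h => hmax h.2)]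
              rw [e1, e2]; ring
          · -- r ∉ S
            have hq1r : q₁ ≠ r := fun h => hrS (h ▸ hq1S)
            have hq2r : q₂ ≠ r := fun h => hrS (h ▸ hq2S)
            have hnm : ∀ (T : Set α), T ⊆ S → ¬ (r ∈ T ∧ ∀ y ∈ T, r ≤ y → r = y) :=
              fun T hT h => hrS (hT h.1)
            have hsubS : ∀ (T : Set α), S \ T ⊆ S := fun T => Set.diff_subset
            by_cases hall : ∀ y, y < r → y ∈ S
            · have t0 : tog S r = 1 := by
                refine tog_one ⟨hrS, ?_⟩
                intro y hy hyr
                by_contra hne'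
                exact hy (hall y (lt_of_le_of_ne hyr hne'))
              by_cases h1r : q₁ < r
              · by_cases h2r : q₂ < r
                · -- then r = p, contradiction
                  exfalso
                  refine hrp (huniq r ⟨h1r, fun z hz1 hzr => ?_⟩ ⟨h2r, fun z hz2 hzr => ?_⟩)
                  · rcases (hmemS z).mp (hall z hzr) with h' | h'
                    · exact absurd h' (not_le_of_gt hz1)
                    · exact hq1q2 (hz1.le.trans h')
                  · rcases (hmemS z).mp (hall z hzr) with h' | h'
                    · exact hq2q1 (hz2.le.trans h')
                    · exact absurd h' (not_le_of_gt hz2)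
                · -- q₁ < r, ¬ q₂ < r
                  have h2r' : ¬ q₂ ≤ r := fun h => h2r (lt_of_le_of_ne h hq2r)
                  have t1 : tog (S \ {q₂}) r = 1 := by
                    refine tog_one ⟨hrnotinJ r _ hrS (hsubS _), ?_⟩
                    intro y hy hyr
                    by_contra hne'
                    have hyS : y ∈ S := hall y (lt_of_le_of_ne hyr hne')
                    have : y = q₂ := by
                      by_contra h; exact hy ⟨hyS, h⟩
                    exact h2r' (this ▸ hyr)
                  have t2 : tog (S \ {q₁}) r = 0 := by
                    refine tog_zero ?_ (hnm _ (hsubS _))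
                    rintro ⟨-, h⟩
                    exact hq1r (h q₁ (fun hq => hq.2 rfl) h1r.le)
                  have t3 : tog (S \ {q₁, q₂}) r = 0 := by
                    refine tog_zero ?_ (hnm _ (hsubS _))
                    rintro ⟨-, h⟩
                    exact hq1r (h q₁ (fun hq => hq.2 (Or.inl rfl)) h1r.le)
                  rw [t0, t1, t2, t3]; norm_num
              · have h1r' : ¬ q₁ ≤ r := fun h => h1r (lt_of_le_of_ne h hq1r)
                by_cases h2r : q₂ < r
                · have t1 : tog (S \ {q₂}) r = 0 := by
                    refine tog_zero ?_ (hnm _ (hsubS _))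
                    rintro ⟨-, h⟩
                    exact hq2r (h q₂ (fun hq => hq.2 rfl) h2r.le)
                  have t2 : tog (S \ {q₁}) r = 1 := by
                    refine tog_one ⟨hrnotinJ r _ hrS (hsubS _), ?_⟩
                    intro y hy hyr
                    by_contra hne'
                    have hyS : y ∈ S := hall y (lt_of_le_of_ne hyr hne')
                    have : y = q₁ := by
                      by_contra h; exact hy ⟨hyS, h⟩
                    exact h1r' (this ▸ hyr)
                  have t3 : tog (S \ {q₁, q₂}) r = 0 := by
                    refine tog_zero ?_ (hnm _ (hsubS _))
                    rintro ⟨-, h⟩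
                    exact hq2r (h q₂ (fun hq => hq.2 (Or.inr rfl)) h2r.le)
                  rw [t0, t1, t2, t3]; norm_num
                · have h2r' : ¬ q₂ ≤ r := fun h => h2r (lt_of_le_of_ne h hq2r)
                  have t1 : tog (S \ {q₂}) r = 1 := by
                    refine tog_one ⟨hrnotinJ r _ hrS (hsubS _), ?_⟩
                    intro y hy hyr
                    by_contra hne'
                    have hyS : y ∈ S := hall y (lt_of_le_of_ne hyr hne')
                    have : y = q₂ := by
                      by_contra h; exact hy ⟨hyS, h⟩
                    exact h2r' (this ▸ hyr)
                  have t2 : tog (S \ {q₁}) r = 1 := by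
                    refine tog_one ⟨hrnotinJ r _ hrS (hsubS _), ?_⟩
                    intro y hy hyr
                    by_contra hne'
                    have hyS : y ∈ S := hall y (lt_of_le_of_ne hyr hne')
                    have : y = q₁ := by
                      by_contra h; exact hy ⟨hyS, h⟩
                    exact h1r' (this ▸ hyr)
                  have t3 : tog (S \ {q₁, q₂}) r = 1 := by
                    refine tog_one ⟨hrnotinJ r _ hrS (hsubS _), ?_⟩
                    intro y hy hyr
                    by_contra hne'
                    have hyS : y ∈ S := hall y (lt_of_le_of_ne hyr hne')
                    have : y = q₁ ∨ y = q₂ := by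
                      by_contra h; push_neg at h; exact hy ⟨hyS, fun hq => by
                        rcases hq with hq | hq; exacts [h.1 hq, h.2 hq]⟩
                    rcases this with h | h
                    · exact h1r' (h ▸ hyr)
                    · exact h2r' (h ▸ hyr)
                  rw [t0, t1, t2, t3]; norm_num
            · push_neg at hall
              obtain ⟨y, hyr, hyS⟩ := hall
              have hw : ∀ (T : Set α), T ⊆ S → ¬ (r ∉ T ∧ ∀ z, z ∉ T → z ≤ r → z = r) := by
                intro T hT h
                exact (ne_of_lt hyr) (h.2 y (fun hz => hyS (hT hz)) hyr.le)
              have t0 : tog S r = 0 := tog_zero (hw S (le_refl S)) (fun h => hrS h.1)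
              have t1 : tog (S \ {q₂}) r = 0 :=
                tog_zero (hw _ (hsubS _)) (hnm _ (hsubS _))
              have t2 : tog (S \ {q₁}) r = 0 :=
                tog_zero (hw _ (hsubS _)) (hnm _ (hsubS _))
              have t3 : tog (S \ {q₁, q₂}) r = 0 :=
                tog_zero (hw _ (hsubS _)) (hnm _ (hsubS _))
              rw [t0, t1, t2, t3]; norm_num
  have : ∑ r, cr r * (tog S r - tog (S \ {q₂}) r - tog (S \ {q₁}) r + tog (S \ {q₁, q₂}) r)
      = cr p := by
    rw [Finset.sum_eq_single p]
    · rw [hD p, if_pos rfl, mul_one]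
    · intro b _ hb
      rw [hD b, if_neg hb, mul_zero]
    · intro h; exact absurd (Finset.mem_univ p) h
  rw [key2] at this
  exact this.symm
end

section
/- Let P be a finite poset and suppose there is a linear map sending each order-ideal indicator 1_p to an element Σ_{q ≥ p} c_{q,p} T_q^- of the span of antichain indicators, with c_{p,p} ≠ 0 for all p, such that 1_p - Σ_{q≥p} c_{q,p} T_q^- lies in Span(T_r : r ∈ P) for every p. Then dim A_T(P) = dim I_T(P), where I_T(P) (resp. A_T(P)) is the set of statistics in Span(1_p : p∈P) (resp. Span(T_p^- : p∈P)) expressible as a constant plus a linear combination of the toggleability statistics T_p. -/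
open scoped Classical

noncomputable section

/-- The set of order ideals (lower sets) of `α`. -/
def J (α : Type*) [PartialOrder α] := {I : Set α // IsLowerSet I}

variable {α : Type*} [PartialOrder α] [Fintype α]

/-- The order-ideal indicator statistic `1_p`. -/
def indF (p : α) : J α → ℝ := fun I => if p ∈ I.1 then 1 else 0

/-- The antichain indicator statistic `T_p^-`: indicator of `p ∈ Max I`. -/
def tmF (p : α) : J α → ℝ := fun I => if p ∈ I.1 ∧ ∀ y ∈ I.1, p ≤ y → p = y then 1 else 0

/-- The toggleability statistic `T_p`. -/
def togF (p : α) : J α → ℝ := fun I =>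
  (if p ∉ I.1 ∧ ∀ y, y ∉ I.1 → y ≤ p → y = p then 1 else 0)
    - (if p ∈ I.1 ∧ ∀ y ∈ I.1, p ≤ y → p = y then 1 else 0)

/-!
Evaluating at the principal ideals `↓r` shows that each of the families `1_p`, `T_p^-` and
`Σ_{q ≥ p} c_{q,p} T_q^-` has a triangular matrix of values with nonzero diagonal, so all three
are linearly independent, and the last one spans the same space as the `T_p^-`. Hence
`1_p ↦ Σ_{q ≥ p} c_{q,p} T_q^-` is an isomorphism `Span(1_p) ≃ Span(T_p^-)` that moves each
vector by an element of `Span(T_r)`; it therefore preserves membership in `Span(T_r) + ℝ`, and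
restricts to an isomorphism `I_T(P) ≃ A_T(P)`.
-/

section LinearAlgebra

open Module

theorem finrank_range_inf_eq_of_forall_sub_mem {R M N : Type*} [Ring R] [AddCommGroup M]
    [Module R M] [AddCommGroup N] [Module R N] {f g : M →ₗ[R] N}
    (hf : Function.Injective f) (hg : Function.Injective g) (W : Submodule R N)
    (hfg : ∀ x, f x - g x ∈ W) :
    finrank R ↥(LinearMap.range f ⊓ W) = finrank R ↥(LinearMap.range g ⊓ W) := by
  have hcomap : W.comap f = W.comap g := by
    ext x
    simpa only [Submodule.mem_comap, sub_add_cancel] using W.add_mem_iff_right (y := g x) (hfg x)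
  rw [← Submodule.map_comap_eq, ← Submodule.map_comap_eq,
    ← (Submodule.equivMapOfInjective f hf _).finrank_eq,
    ← (Submodule.equivMapOfInjective g hg _).finrank_eq, hcomap]

theorem finrank_span_inf_eq_of_forall_sub_mem {R N ι : Type*} [Ring R] [AddCommGroup N]
    [Module R N] [Fintype ι] {v w : ι → N} (hv : LinearIndependent R v)
    (hw : LinearIndependent R w) (W : Submodule R N) (hvw : ∀ i, v i - w i ∈ W) :
    finrank R ↥(Submodule.span R (Set.range v) ⊓ W)
      = finrank R ↥(Submodule.span R (Set.range w) ⊓ W) := by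
  rw [← Fintype.range_linearCombination, ← Fintype.range_linearCombination]
  refine finrank_range_inf_eq_of_forall_sub_mem hv.fintypeLinearCombination_injective
    hw.fintypeLinearCombination_injective W fun x => ?_
  simp only [Fintype.linearCombination_apply, ← Finset.sum_sub_distrib, ← smul_sub]
  exact W.sum_mem fun i _ => W.smul_mem _ (hvw i)

theorem linearIndependent_of_apply_triangular {ι β K : Type*} [PartialOrder ι] [Fintype ι]
    [Ring K] [NoZeroDivisors K] (v : ι → β → K) (e : ι → β)
    (hlower : ∀ p r, v p (e r) ≠ 0 → p ≤ r) (hdiag : ∀ p, v p (e p) ≠ 0) :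
    LinearIndependent K v := by
  rw [Fintype.linearIndependent_iff]
  intro g hg r
  induction r using WellFoundedLT.induction with
  | ind r ih =>
    have heval : ∑ p, g p * v p (e r) = 0 := by simpa using congrFun hg (e r)
    rw [Finset.sum_eq_single r] at heval
    · exact (mul_eq_zero.mp heval).resolve_right (hdiag r)
    · intro p _ hpr
      by_cases hv : v p (e r) = 0
      · rw [hv, mul_zero]
      · rw [ih p ((hlower p r hv).lt_of_ne hpr), zero_mul]
    · simp

end LinearAlgebra

section PrincipalIdeals

variable {P : Type*} [PartialOrder P]

def iicIdeal (q : P) : J P := ⟨Set.Iic q, isLowerSet_Iic q⟩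

theorem indF_iicIdeal (p q : P) : indF p (iicIdeal q) = if p ≤ q then 1 else 0 := rfl

end PrincipalIdeals

theorem tmF_iicIdeal (p q : α) : tmF p (iicIdeal q) = if p = q then 1 else 0 := by
  have hmax : (p ∈ Set.Iic q ∧ ∀ y ∈ Set.Iic q, p ≤ y → p = y) ↔ p = q :=
    ⟨fun hp => hp.2 q le_rfl hp.1,
      fun h => h ▸ ⟨le_rfl, fun y hy hpy => le_antisymm hpy hy⟩⟩
  simp only [tmF, iicIdeal, hmax]

/-- The image `Σ_{q ≥ p} c_{q,p} T_q^-` of `1_p`. -/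
def tmSum (c : α → α → ℝ) (p : α) : J α → ℝ :=
  ∑ q ∈ Finset.univ.filter (fun q => p ≤ q), c q p • tmF q

theorem tmSum_iicIdeal (c : α → α → ℝ) (p r : α) :
    tmSum c p (iicIdeal r) = if p ≤ r then c r p else 0 := by
  simp [tmSum, Finset.sum_apply, tmF_iicIdeal]

theorem linearIndependent_indF : LinearIndependent ℝ (indF (α := α)) :=
  linearIndependent_of_apply_triangular _ iicIdeal
    (fun p r h => by simpa [indF_iicIdeal] using h) (by simp [indF_iicIdeal])

theorem linearIndependent_tmF : LinearIndependent ℝ (tmF (α := α)) :=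
  linearIndependent_of_apply_triangular _ iicIdeal
    (fun p r h => by simp_all [tmF_iicIdeal]) (by simp [tmF_iicIdeal])

theorem linearIndependent_tmSum {c : α → α → ℝ} (hc : ∀ p, c p p ≠ 0) :
    LinearIndependent ℝ (tmSum c) :=
  linearIndependent_of_apply_triangular _ iicIdeal
    (fun p r h => by simp_all [tmSum_iicIdeal]) (by simpa [tmSum_iicIdeal] using hc)

theorem span_range_tmSum {c : α → α → ℝ} (hc : ∀ p, c p p ≠ 0) :
    Submodule.span ℝ (Set.range (tmSum c)) = Submodule.span ℝ (Set.range (tmF (α := α))) := by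
  have := FiniteDimensional.span_of_finite ℝ (Set.finite_range (tmF (α := α)))
  refine Submodule.eq_of_le_of_finrank_eq ?_ ?_
  · refine Submodule.span_le.mpr (Set.range_subset_iff.mpr fun p => ?_)
    exact Submodule.sum_mem _ fun q _ =>
      Submodule.smul_mem _ _ (Submodule.subset_span (Set.mem_range_self q))
  · rw [finrank_span_eq_card (linearIndependent_tmSum hc),
      finrank_span_eq_card linearIndependent_tmF]

/-- If each indicator `1_p` is `≡`-equivalent (mod the span of the toggles `T_r`) to a
combination `Σ_{q ≥ p} c_{q,p} T_q^-` with `c_{p,p} ≠ 0`, then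
`dim A_T(P) = dim I_T(P)`. -/
theorem stmt_10 (c : α → α → ℝ) (hc : ∀ p, c p p ≠ 0)
    (hrel : ∀ p : α,
      indF p - (∑ q ∈ Finset.univ.filter (fun q => p ≤ q), c q p • tmF q)
        ∈ Submodule.span ℝ (Set.range (togF (α := α)))) :
    Module.finrank ℝ
        ↥(Submodule.span ℝ (Set.range (tmF (α := α))) ⊓
          (Submodule.span ℝ (Set.range (togF (α := α))) ⊔
            Submodule.span ℝ {(fun _ => 1 : J α → ℝ)}))
      = Module.finrank ℝ
        ↥(Submodule.span ℝ (Set.range (indF (α := α))) ⊓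
          (Submodule.span ℝ (Set.range (togF (α := α))) ⊔
            Submodule.span ℝ {(fun _ => 1 : J α → ℝ)})) := by
  rw [← span_range_tmSum hc]
  exact (finrank_span_inf_eq_of_forall_sub_mem linearIndependent_indF
    (linearIndependent_tmSum hc) _ fun p => Submodule.mem_sup_left (hrel p)).symm

end
end

section
/- Let P = [m]×[n] with m,n ≥ 2 and fix (a,b) ∈ P. Define f: J(P) → ℝ by f(I) = Σ_{(i,j) ≥ (a,b)} T^-_{(i,j)}(I) - Σ_{(i,j) : i > a, j > b} T^+_{(i,j)}(I), where T^-_{(i,j)}(I) = [(i,j) ∈ Max(I)] and T^+_{(i,j)}(I) = [(i,j) ∉ I and I ∪ {(i,j)} is an order ideal]. Then f(I) = 1_{(a,b)}(I) for every order ideal I, i.e., f(I) = 1 if (a,b) ∈ I and f(I) = 0 otherwise. -/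
/-!
Sum row by row. Within one row, a lower set `I` of `α × β` has at most one maximal element in
the columns `≥ b`, and its complement has at most one minimal element (an addable cell) in the
columns `> b`, so each row contributes a `0`/`1` indicator. If `a ⋖ a'` and `(a, b) ∈ I`, let
`c` be the last column of `I` in row `a`: then `(a, c)` is maximal in `I` iff `(a', c) ∉ I`, and
this is also exactly when row `a'` has an addable cell beyond column `b` (provided `(a', b) ∈ I`).
Hence the contribution of row `a` to the first sum minus that of row `a'` to the second is
`[(a, b) ∈ I] - [(a', b) ∈ I]`, and the whole difference telescopes to `[(a, b) ∈ I]`.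
-/

open scoped Classical

/-- `T_p^-(I)`: indicator of `p ∈ Max I`. -/
noncomputable def tm {α : Type*} [PartialOrder α] (I : Set α) (p : α) : ℝ :=
  if p ∈ I ∧ ∀ y ∈ I, p ≤ y → p = y then 1 else 0

/-- `T_p^+(I)`: indicator of `p ∉ I` with `I ∪ {p}` still an order ideal. -/
noncomputable def tp {α : Type*} [PartialOrder α] (I : Set α) (p : α) : ℝ :=
  if p ∉ I ∧ IsLowerSet (I ∪ {p}) then 1 else 0

open Finset

section Poset

variable {α : Type*} [PartialOrder α] {I : Set α} {p : α}

theorem tm_eq_ite : tm I p = if Maximal (· ∈ I) p then 1 else 0 := by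
  simp only [tm, maximal_mem_iff]

theorem IsLowerSet.minimal_notMem_iff (hI : IsLowerSet I) :
    Minimal (· ∉ I) p ↔ p ∉ I ∧ IsLowerSet (I ∪ {p}) := by
  rw [minimal_iff]
  refine ⟨fun ⟨hp, hmin⟩ => ⟨hp, fun r q hqr hr => ?_⟩,
    fun ⟨hp, hlow⟩ => ⟨hp, fun q hq hqp => ?_⟩⟩
  · rcases hr with hr | rfl
    · exact Or.inl (hI hqr hr)
    · by_cases hq : q ∈ I
      · exact Or.inl hq
      · exact Or.inr (hmin hq hqr).symm
  · rcases hlow hqp (Or.inr rfl) with hq' | rfl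
    · exact absurd hq' hq
    · rfl

theorem tp_eq_ite (hI : IsLowerSet I) : tp I p = if Minimal (· ∉ I) p then 1 else 0 := by
  simp only [tp, hI.minimal_notMem_iff]

end Poset

theorem Finset.sum_boole_eq_ite_exists {ι R : Type*} [AddCommMonoidWithOne R] {s : Finset ι}
    {P : ι → Prop} [DecidablePred P] (h : ∀ x ∈ s, ∀ y ∈ s, P x → P y → x = y) :
    ∑ x ∈ s, (if P x then (1 : R) else 0) = if ∃ x ∈ s, P x then 1 else 0 := by
  rw [sum_boole]
  split_ifs with hex
  · obtain ⟨x, hx, hPx⟩ := hex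
    have : s.filter P = {x} := eq_singleton_iff_unique_mem.mpr
      ⟨mem_filter.mpr ⟨hx, hPx⟩, fun y hy =>
        h y (mem_filter.mp hy).1 x hx (mem_filter.mp hy).2 hPx⟩
    simp [this]
  · simp [filter_eq_empty_iff.mpr fun x hx hPx => hex ⟨x, hx, hPx⟩]

section Grid

variable {α β : Type*} [LinearOrder β] {I : Set (α × β)} {a a' : α} {b c : β}

theorem exists_max_mem_row [LocallyFiniteOrderTop β] (h : (a, b) ∈ I) :
    ∃ c, (a, c) ∈ I ∧ ∀ j, (a, j) ∈ I → j ≤ c := by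
  obtain ⟨c, hc, hcmax⟩ := exists_max_image ((Ici b).filter fun j => (a, j) ∈ I) id
    ⟨b, mem_filter.mpr ⟨mem_Ici.mpr le_rfl, h⟩⟩
  simp only [mem_filter, mem_Ici, id, and_imp] at hc hcmax
  obtain ⟨hbc, hac⟩ := hc
  exact ⟨c, hac, fun j hj => (le_total b j).elim (hcmax j · hj) (·.trans hbc)⟩

variable [LinearOrder α]

theorem sum_tm_row [LocallyFiniteOrderTop β] (I : Set (α × β)) (a : α) (b : β) :
    ∑ j ∈ Ici b, tm I (a, j) = if ∃ j ≥ b, Maximal (· ∈ I) (a, j) then 1 else 0 := by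
  simp only [tm_eq_ite]
  rw [sum_boole_eq_ite_exists fun x _ y _ hx hy =>
    (le_total x y).elim (fun h => congrArg Prod.snd (hx.eq_of_le hy.prop ⟨le_rfl, h⟩))
      (fun h => congrArg Prod.snd (hy.eq_of_le hx.prop ⟨le_rfl, h⟩).symm)]
  simp only [mem_Ici, ge_iff_le]

theorem sum_tp_row [LocallyFiniteOrderTop β] (hI : IsLowerSet I) (a : α) (b : β) :
    ∑ j ∈ Ioi b, tp I (a, j) = if ∃ j > b, Minimal (· ∉ I) (a, j) then 1 else 0 := by
  simp only [tp_eq_ite hI]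
  rw [sum_boole_eq_ite_exists fun x _ y _ hx hy =>
    (le_total x y).elim (fun h => congrArg Prod.snd (hy.eq_of_le hx.prop ⟨le_rfl, h⟩))
      (fun h => congrArg Prod.snd (hx.eq_of_le hy.prop ⟨le_rfl, h⟩).symm)]
  simp only [mem_Ioi, gt_iff_lt]

theorem exists_maximal_row_iff (hI : IsLowerSet I) (hab : (a, b) ∈ I) (hac : (a, c) ∈ I)
    (hc : ∀ j, (a, j) ∈ I → j ≤ c) :
    (∃ j ≥ b, Maximal (· ∈ I) (a, j)) ↔ ∀ x > a, (x, c) ∉ I := by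
  constructor
  · rintro ⟨j, -, hj⟩ x hax hxc
    have hjc : (a, j) = (a, c) := hj.eq_of_le hac ⟨le_rfl, hc j hj.prop⟩
    have := hj.eq_of_le hxc ⟨hax.le, (congrArg Prod.snd hjc).le⟩
    exact hax.ne (congrArg Prod.fst this)
  · refine fun hcol => ⟨c, hc b hab, hac, fun q hq hle => ?_⟩
    have hq1 : q.1 = a :=
      le_antisymm (not_lt.mp fun h => hcol q.1 h (hI (Prod.mk_le_mk.2 ⟨le_rfl, hle.2⟩) hq))
        hle.1
    exact ⟨hq1.le, hc q.2 (by rwa [← hq1])⟩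

theorem exists_minimal_row_iff [LocallyFiniteOrderTop β] (hI : IsLowerSet I) (hcov : a ⋖ a')
    (ha'b : (a', b) ∈ I) (hac : (a, c) ∈ I) (hc : ∀ j, (a, j) ∈ I → j ≤ c) :
    (∃ j > b, Minimal (· ∉ I) (a', j)) ↔ (a', c) ∉ I := by
  constructor
  · rintro ⟨j, -, hj⟩ ha'c
    have haj : (a, j) ∈ I := by_contra fun h =>
      hcov.lt.ne (congrArg Prod.fst (hj.eq_of_le h ⟨hcov.lt.le, le_rfl⟩))
    exact hj.prop (hI (Prod.mk_le_mk.2 ⟨le_rfl, hc j haj⟩) ha'c)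
  · intro ha'c
    have hbc : b ≤ c := hc b (hI (Prod.mk_le_mk.2 ⟨hcov.lt.le, le_rfl⟩) ha'b)
    obtain ⟨j, hj, hjmin⟩ := exists_min_image ((Ici b).filter fun j => (a', j) ∉ I) id
      ⟨c, mem_filter.mpr ⟨mem_Ici.mpr hbc, ha'c⟩⟩
    simp only [mem_filter, mem_Ici, id, and_imp] at hj hjmin
    obtain ⟨hbj, ha'j⟩ := hj
    replace hbj : b < j := lt_of_le_of_ne hbj fun h => ha'j (h ▸ ha'b)
    refine ⟨j, hbj, minimal_iff.mpr ⟨ha'j, fun q hq hle => ?_⟩⟩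
    have hbq : b ≤ q.2 :=
      not_lt.mp fun h => hq (hI (show q ≤ (a', b) from ⟨hle.1, h.le⟩) ha'b)
    have hq1 : q.1 = a' := le_antisymm hle.1 <| not_lt.mp fun h =>
      hq (hI (show q ≤ (a, c) from ⟨hcov.le_of_lt h, hle.2.trans (hjmin c hbc ha'c)⟩) hac)
    have hq2 : j ≤ q.2 := hjmin q.2 hbq (by rwa [← hq1])
    exact Prod.ext hq1.symm (le_antisymm hq2 hle.2)

theorem mem_of_exists_maximal_row (hI : IsLowerSet I) :
    (∃ j ≥ b, Maximal (· ∈ I) (a, j)) → (a, b) ∈ I := fun ⟨_, hbj, hj⟩ =>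
  hI (Prod.mk_le_mk.2 ⟨le_rfl, hbj⟩) hj.prop

theorem mem_of_exists_minimal_row : (∃ j > b, Minimal (· ∉ I) (a, j)) → (a, b) ∈ I :=
  fun ⟨_, hbj, hj⟩ => by_contra fun h =>
    hbj.ne (congrArg Prod.snd (hj.eq_of_le h ⟨le_rfl, hbj.le⟩))

theorem exists_maximal_row_iff_of_isMax [LocallyFiniteOrderTop β] (hI : IsLowerSet I)
    (ha : IsMax a) : (∃ j ≥ b, Maximal (· ∈ I) (a, j)) ↔ (a, b) ∈ I := by
  refine ⟨mem_of_exists_maximal_row hI, fun hab => ?_⟩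
  obtain ⟨c, hac, hc⟩ := exists_max_mem_row hab
  exact (exists_maximal_row_iff hI hab hac hc).mpr fun _ hx => absurd hx ha.not_lt

theorem ite_maximal_row_sub_ite_minimal_row_of_covBy [LocallyFiniteOrderTop β]
    (hI : IsLowerSet I) (hcov : a ⋖ a') (b : β) :
    ((if ∃ j ≥ b, Maximal (· ∈ I) (a, j) then 1 else 0 : ℝ) -
        if ∃ j > b, Minimal (· ∉ I) (a', j) then 1 else 0) =
      (if (a, b) ∈ I then 1 else 0) - if (a', b) ∈ I then 1 else 0 := by
  by_cases hab : (a, b) ∈ I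
  · obtain ⟨c, hac, hc⟩ := exists_max_mem_row hab
    have hcol : (∀ x > a, (x, c) ∉ I) ↔ (a', c) ∉ I :=
      ⟨fun h => h a' hcov.lt,
        fun h x hx hxc => h (hI (Prod.mk_le_mk.2 ⟨hcov.ge_of_gt hx, le_rfl⟩) hxc)⟩
    rw [exists_maximal_row_iff hI hab hac hc, hcol]
    by_cases ha'b : (a', b) ∈ I
    · rw [exists_minimal_row_iff hI hcov ha'b hac hc]
      simp [hab, ha'b]
    · have ha'c : (a', c) ∉ I := fun h => ha'b (hI (Prod.mk_le_mk.2 ⟨le_rfl, hc b hab⟩) h)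
      simp [hab, ha'b, ha'c, mt mem_of_exists_minimal_row ha'b]
  · have ha'b : (a', b) ∉ I := fun h => hab (hI (Prod.mk_le_mk.2 ⟨hcov.lt.le, le_rfl⟩) h)
    simp [hab, ha'b, mt (mem_of_exists_maximal_row hI) hab,
      mt mem_of_exists_minimal_row ha'b]

end Grid

theorem Finset.sum_Ici_sub_sum_Ioi_eq_of_covBy {α R : Type*} [LinearOrder α]
    [LocallyFiniteOrderTop α] [AddCommGroup R] {f g h : α → R}
    (hstep : ∀ a a', a ⋖ a' → f a - g a' = h a - h a') (htop : ∀ a, IsMax a → f a = h a)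
    (a : α) : ∑ x ∈ Ici a, f x - ∑ x ∈ Ioi a, g x = h a := by
  refine (measure fun x => #(Ioi x)).wf.induction
    (C := fun a => ∑ x ∈ Ici a, f x - ∑ x ∈ Ioi a, g x = h a) a fun a ih => ?_
  rw [Ici_eq_cons_Ioi, sum_cons]
  rcases (Ioi a).eq_empty_or_nonempty with hmax | hne
  · rw [hmax, sum_empty, sum_empty, add_zero, sub_zero]
    exact htop a (Ioi_eq_empty.mp hmax)
  set a' := (Ioi a).min' hne
  have hcov : a ⋖ a' := ⟨mem_Ioi.mp (min'_mem _ hne),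
    fun x hax hxa' => (min'_le _ x (mem_Ioi.mpr hax)).not_gt hxa'⟩
  have hIoi : Ioi a = Ici a' := coe_injective (by simpa using hcov.Ioi_eq)
  have hg : ∑ x ∈ Ici a', g x = g a' + ∑ x ∈ Ioi a', g x := by
    rw [Ici_eq_cons_Ioi, sum_cons]
  have ih' := ih a' (show #(Ioi a') < #(Ioi a) by
    rw [hIoi, Ici_eq_cons_Ioi a', card_cons]; omega)
  rw [hIoi, hg, ← sub_add_cancel (h a) (h a'), ← hstep a a' hcov, ← ih']
  abel

theorem sum_tm_sub_sum_tp {α β : Type*} [LinearOrder α] [LocallyFiniteOrderTop α]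
    [LinearOrder β] [LocallyFiniteOrderTop β] {I : Set (α × β)} (hI : IsLowerSet I)
    (a : α) (b : β) :
    ∑ p ∈ Ici (a, b), tm I p - ∑ p ∈ Ioi a ×ˢ Ioi b, tp I p =
      if (a, b) ∈ I then 1 else 0 := by
  rw [← Ici_product_Ici, sum_product, sum_product]
  simp only [sum_tm_row, sum_tp_row hI]
  exact sum_Ici_sub_sum_Ioi_eq_of_covBy
    (fun _ _ hcov => ite_maximal_row_sub_ite_minimal_row_of_covBy hI hcov b)
    (fun _ hx => by rw [exists_maximal_row_iff_of_isMax hI hx]) a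

theorem stmt_11_general (m n : ℕ) (a : Fin m) (b : Fin n)
    (I : Set (Fin m × Fin n)) (hI : IsLowerSet I) :
    (∑ p ∈ Finset.univ.filter (fun p : Fin m × Fin n => (a, b) ≤ p), tm I p)
      - (∑ p ∈ Finset.univ.filter (fun p : Fin m × Fin n => a < p.1 ∧ b < p.2), tp I p)
      = if (a, b) ∈ I then 1 else 0 := by
  have hIci : univ.filter (fun p : Fin m × Fin n => (a, b) ≤ p) = Ici (a, b) := by ext; simp
  have hIoi : univ.filter (fun p : Fin m × Fin n => a < p.1 ∧ b < p.2) = Ioi a ×ˢ Ioi b := by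
    ext; simp
  rw [hIci, hIoi]
  exact sum_tm_sub_sum_tp hI a b

/-- In `P = [m] × [n]`, for any fixed `(a,b)` and any order ideal `I`,
`Σ_{(i,j) ≥ (a,b)} T^-_{(i,j)}(I) - Σ_{i > a, j > b} T^+_{(i,j)}(I) = 1_{(a,b)}(I)`. -/
theorem stmt_11 (m n : ℕ) (hm : 2 ≤ m) (hn : 2 ≤ n) (a : Fin m) (b : Fin n)
    (I : Set (Fin m × Fin n)) (hI : IsLowerSet I) :
    (∑ p ∈ Finset.univ.filter (fun p : Fin m × Fin n => (a, b) ≤ p), tm I p)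
      - (∑ p ∈ Finset.univ.filter (fun p : Fin m × Fin n => a < p.1 ∧ b < p.2), tp I p)
      = if (a, b) ∈ I then 1 else 0 :=
  stmt_11_general m n a b I hI
end

section
/- Let P be a finite poset and let O be an orbit of rowmotion on J(P). Then for every p ∈ P, the number of ideals I ∈ O with p ∈ Min(P\I) equals the number of ideals I ∈ O with p ∈ Max(I); equivalently, Σ_{I∈O} T_p(I) = 0 (the toggleability statistic T_p is 0-mesic under rowmotion). -/
open scoped Classical

/-- Rowmotion: `I` is sent to the order ideal generated by the minimal elements of
`P \ I`. -/
def Row {α : Type*} [PartialOrder α] (I : {I : Set α // IsLowerSet I}) :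
    {I : Set α // IsLowerSet I} :=
  ⟨{x | ∃ y, (y ∉ I.1 ∧ ∀ z, z ∉ I.1 → z ≤ y → z = y) ∧ x ≤ y},
    fun _ _ hba ⟨y, hy, hay⟩ => ⟨y, hy, hba.trans hay⟩⟩

/-!
Since `Row I` is generated by `Min(P \ I)` as a down-set, its maximal elements are exactly the
elements of `Min(P \ I)`. Hence `T_p(I) = [p ∈ Max (Row I)] - [p ∈ Max I]`, and the sum of `T_p`
along an orbit telescopes to `0`.
-/

section Rowmotion

variable {α : Type*} [PartialOrder α]

lemma minimal_notMem_iff {s : Set α} {p : α} :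
    Minimal (· ∉ s) p ↔ p ∉ s ∧ ∀ y, y ∉ s → y ≤ p → y = p := by
  simp only [minimal_iff, eq_comm (a := p)]

lemma mem_row_iff {J : {I : Set α // IsLowerSet I}} {x : α} :
    x ∈ (Row J).1 ↔ ∃ y, Minimal (· ∉ J.1) y ∧ x ≤ y := by
  simp only [minimal_notMem_iff]
  rfl

lemma maximal_mem_row_iff {J : {I : Set α // IsLowerSet I}} {p : α} :
    Maximal (· ∈ (Row J).1) p ↔ Minimal (· ∉ J.1) p := by
  constructor
  · intro hmax
    obtain ⟨y, hy, hpy⟩ := mem_row_iff.mp hmax.prop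
    rwa [hmax.eq_of_le (mem_row_iff.mpr ⟨y, hy, le_rfl⟩) hpy]
  · intro hmin
    refine ⟨mem_row_iff.mpr ⟨p, hmin, le_rfl⟩, fun x hx hpx => ?_⟩
    obtain ⟨y, hy, hxy⟩ := mem_row_iff.mp hx
    exact hxy.trans (hy.eq_of_le hmin.prop (hpx.trans hxy)).ge

lemma tog_eq_ite_sub_ite (J : Set α) (p : α) :
    tog J p = (if Minimal (· ∉ J) p then 1 else 0) - (if Maximal (· ∈ J) p then 1 else 0) := by
  simp only [tog, minimal_notMem_iff, maximal_mem_iff]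
  split_ifs <;> simp_all

lemma tog_eq_ite_row_sub_ite (J : {I : Set α // IsLowerSet I}) (p : α) :
    tog J.1 p = (if Maximal (· ∈ (Row J).1) p then 1 else 0)
      - (if Maximal (· ∈ J.1) p then 1 else 0) := by
  rw [tog_eq_ite_sub_ite, maximal_mem_row_iff]

end Rowmotion

theorem stmt_19_general {α : Type*} [PartialOrder α]
    (I : {I : Set α // IsLowerSet I}) (c : ℕ)
    (hcyc : Row^[c] I = I) (p : α) :
    ∑ k ∈ Finset.range c, tog (Row^[k] I).1 p = 0 := by
  let isMax (k : ℕ) : ℝ := if Maximal (· ∈ (Row^[k] I).1) p then 1 else 0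
  have hstep (k : ℕ) : tog (Row^[k] I).1 p = isMax (k + 1) - isMax k := by
    simp only [isMax, Function.iterate_succ_apply']
    exact tog_eq_ite_row_sub_ite _ p
  rw [Finset.sum_congr rfl fun k _ => hstep k, Finset.sum_range_sub]
  simp only [isMax, hcyc, Function.iterate_zero_apply]
  exact sub_self _

/-- The toggleability statistic `T_p` is `0`-mesic under rowmotion: its sum over any
rowmotion orbit is `0`. -/
theorem stmt_19 {α : Type*} [PartialOrder α] [Fintype α]
    (I : {I : Set α // IsLowerSet I}) (c : ℕ) (hc : 0 < c)
    (hcyc : Row^[c] I = I) (p : α) :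
    ∑ k ∈ Finset.range c, tog (Row^[k] I).1 p = 0 :=
  stmt_19_general I c hcyc p
end
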